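/- Let p be a prime and k a perfect field of characteristic p, and let W₂(k) be the ring of length-2 p-typical truncated Witt vectors over k. Let σ be a finite index type and F a multivariate polynomial over W₂(k) in variables indexed by σ. Let a₀, a₁ : σ → k be tuples, write a := ((a₀(j), 0))_{j ∈ σ} for the tuple of truncated Witt vectors with second coefficient zero, and assume that for every i ∈ σ the value (∂F/∂xᵢ)(a) lies in the ideal p·W₂(k). Then F evaluated at the tuple ((a₀(j), a₁(j)))_{j ∈ σ} equals F evaluated at a; that is, the value of F is independent of the second Witt coefficients of the arguments. -/

import Mathlib

/-!
Write each argument as `(a₀, a₁) = (a₀, 0) + (0, a₁)`. Increments with vanishing zeroth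
coefficient are images of the Verschiebung, so in `W₂` any two of them multiply to zero, and so
does each of them with `p`, which is itself `V 1` in characteristic `p`. Hence the first-order
Taylor expansion of `F` at `((a₀ j, 0))ⱼ` is exact, and its linear term vanishes because every
partial derivative there is a multiple of `p`.
-/

open MvPolynomial

namespace MvPolynomial

variable {R σ : Type*} [CommRing R] [Fintype σ]

theorem eval_add_of_mul_eq_zero (F : MvPolynomial σ R) (x ε : σ → R)
    (hε : ∀ i j, ε i * ε j = 0) :
    eval (x + ε) F = eval x F + ∑ i, eval x (pderiv i F) * ε i := by
  classical
  induction F using MvPolynomial.induction_on with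
  | C a => simp
  | add f g hf hg => simp only [map_add, hf, hg, add_mul, Finset.sum_add_distrib]; ring
  | mul_X f i hf =>
    have hsq : (∑ j, eval x (pderiv j f) * ε j) * ε i = 0 := by
      simp [Finset.sum_mul, mul_assoc, hε]
    simp only [eval_mul, eval_X, hf, Pi.add_apply, add_mul, Derivation.leibniz, pderiv_X,
      Pi.single_apply, apply_ite, smul_eq_mul, mul_one, mul_zero, map_add, map_zero, ite_mul,
      zero_mul, mul_assoc, Finset.sum_add_distrib, Finset.sum_ite_eq, Finset.mem_univ,
      if_true, ← Finset.mul_sum]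
    linear_combination hsq

end MvPolynomial

namespace WittVector

variable {p : ℕ} [Fact p.Prime] {R : Type*} [CommRing R] [CharP R p]

theorem coeff_mul_eq_zero_of_lt_add {x y : WittVector p R} {m n : ℕ}
    (hx : ∀ i < m, x.coeff i = 0) (hy : ∀ i < n, y.coeff i = 0) {k : ℕ} (hk : k < m + n) :
    (x * y).coeff k = 0 := by
  rw [eq_iterate_verschiebung hx, eq_iterate_verschiebung hy, iterate_verschiebung_mul]
  exact iterate_verschiebung_coeff_eq_zero _ hk

end WittVector

namespace TruncatedWittVector

variable {p : ℕ} [Fact p.Prime] {R : Type*} [CommRing R]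

theorem mk_two_eq_add (a b : R) : mk p ![a, b] = mk p ![a, 0] + mk p ![0, b] := by
  have hdisj : ∀ n, (WittVector.mk p fun n => if n = 0 then a else 0).coeff n = 0 ∨
      (WittVector.mk p fun n => if n = 0 then 0 else b).coeff n = 0 := by
    intro n; rcases n with _ | n <;> simp
  calc mk p ![a, b]
      = WittVector.truncate 2 ((WittVector.mk p fun n => if n = 0 then a else 0) +
          WittVector.mk p fun n => if n = 0 then 0 else b) := by
        ext i
        rw [WittVector.coeff_truncate, WittVector.coeff_add_of_disjoint _ _ _ hdisj]
        fin_cases i <;> simp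
    _ = mk p ![a, 0] + mk p ![0, b] := by
        rw [map_add]; congr 1 <;> ext i <;> fin_cases i <;> simp

variable [CharP R p]

theorem mul_eq_zero_of_coeff_zero {t u : TruncatedWittVector p 2 R}
    (ht : t.coeff 0 = 0) (hu : u.coeff 0 = 0) : t * u = 0 := by
  obtain ⟨x, rfl⟩ := WittVector.truncate_surjective p 2 R t
  obtain ⟨y, rfl⟩ := WittVector.truncate_surjective p 2 R u
  rw [← map_mul, ← RingHom.mem_ker, WittVector.mem_ker_truncate]
  exact fun i hi => WittVector.coeff_mul_eq_zero_of_lt_add (m := 1) (n := 1)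
    (by simpa using ht) (by simpa using hu) hi

theorem coeff_p_zero {n : ℕ} : (p : TruncatedWittVector p (n + 1) R).coeff 0 = 0 := by
  rw [← map_natCast (WittVector.truncate (n + 1)), WittVector.coeff_truncate]
  exact WittVector.coeff_p_zero p R

end TruncatedWittVector

theorem wittVector2_eval_indep_of_pderiv_mem_general (p : ℕ) [Fact p.Prime] (k : Type*) [Field k]
    [CharP k p] (σ : Type*) [Fintype σ]
    (F : MvPolynomial σ (TruncatedWittVector p 2 k)) (a₀ a₁ : σ → k)
    (hder : ∀ i : σ,
      eval (fun j => (TruncatedWittVector.mk p ![a₀ j, 0] : TruncatedWittVector p 2 k))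
          (pderiv i F) ∈ Ideal.span {(p : TruncatedWittVector p 2 k)}) :
    eval (fun j => (TruncatedWittVector.mk p ![a₀ j, a₁ j] : TruncatedWittVector p 2 k)) F =
      eval (fun j => (TruncatedWittVector.mk p ![a₀ j, 0] : TruncatedWittVector p 2 k)) F := by
  set x : σ → TruncatedWittVector p 2 k := fun j => TruncatedWittVector.mk p ![a₀ j, 0]
  set ε : σ → TruncatedWittVector p 2 k := fun j => TruncatedWittVector.mk p ![0, a₁ j]
  have hε : ∀ j, (ε j).coeff 0 = 0 := fun j => TruncatedWittVector.coeff_mk _ _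
  have hsplit : (fun j => TruncatedWittVector.mk p ![a₀ j, a₁ j]) = x + ε :=
    funext fun j => TruncatedWittVector.mk_two_eq_add (a₀ j) (a₁ j)
  rw [hsplit, eval_add_of_mul_eq_zero F x ε fun i j =>
    TruncatedWittVector.mul_eq_zero_of_coeff_zero (hε i) (hε j)]
  refine add_eq_left.mpr (Finset.sum_eq_zero fun i _ => ?_)
  obtain ⟨c, hc⟩ := Ideal.mem_span_singleton'.mp (hder i)
  rw [← hc, mul_assoc,
    TruncatedWittVector.mul_eq_zero_of_coeff_zero TruncatedWittVector.coeff_p_zero (hε i),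
    mul_zero]

/-- Over `W₂(k)` for a perfect field `k` of characteristic `p`: if all partial derivatives
of `F` at `a = ((a₀ j, 0))ⱼ` lie in the ideal `p·W₂(k)`, then the value of `F` at
`((a₀ j, a₁ j))ⱼ` is independent of the second Witt coefficients `a₁`. -/
theorem wittVector2_eval_indep_of_pderiv_mem (p : ℕ) [Fact p.Prime] (k : Type*) [Field k]
    [CharP k p] [PerfectRing k p] (σ : Type*) [Fintype σ]
    (F : MvPolynomial σ (TruncatedWittVector p 2 k)) (a₀ a₁ : σ → k)
    (hder : ∀ i : σ,
      eval (fun j => (TruncatedWittVector.mk p ![a₀ j, 0] : TruncatedWittVector p 2 k))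
          (pderiv i F) ∈ Ideal.span {(p : TruncatedWittVector p 2 k)}) :
    eval (fun j => (TruncatedWittVector.mk p ![a₀ j, a₁ j] : TruncatedWittVector p 2 k)) F =
      eval (fun j => (TruncatedWittVector.mk p ![a₀ j, 0] : TruncatedWittVector p 2 k)) F :=
  wittVector2_eval_indep_of_pderiv_mem_general p k σ F a₀ a₁ hder
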